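/- Let μ₀ be a commutative multiplication on A whose associator satisfies 2A_{μ₀}(x,y,z) − A_{μ₀}(y,x,z) − A_{μ₀}(z,y,x) − A_{μ₀}(x,z,y) + A_{μ₀}(y,z,x) = 0 for all x,y,z. For bilinear maps φ,φ' on A set D(φ,φ')(x,y,z) = φ(x,φ'(y,z)) − φ(φ'(x,y),z). Let (φ_i)_{i≥0} satisfy φ₀ = μ₀ and, for every k ≥ 0 and all x,y,z ∈ A: ∑_{i+j=k} [2·D(φ_i,φ_j)(x,y,z) − D(φ_i,φ_j)(y,x,z) − D(φ_i,φ_j)(z,y,x) − D(φ_i,φ_j)(x,z,y) + D(φ_i,φ_j)(y,z,x)] = 0. Then the skew-symmetric part ψ₁ of φ₁ satisfies the Jacobi identity, and setting L(x,y,z) = ψ₁(μ₀(x,y),z) − μ₀(x,ψ₁(y,z)) − μ₀(y,ψ₁(x,z)), one has L(x,y,z) = L(z,y,x) for all x,y,z ∈ A; that is, (A,μ₀,ψ₁) is a pseudo-Poisson algebra. -/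

import Mathlib

open Finset

/-- The associator of a bilinear multiplication. -/
def assocMap {K A : Type*} [Field K] [AddCommGroup A] [Module K A]
    (μ : A →ₗ[K] A →ₗ[K] A) (x y z : A) : A :=
  μ x (μ y z) - μ (μ x y) z

/-- The skew-symmetric part of a bilinear multiplication. -/
def skewPart {K A : Type*} [Field K] [AddCommGroup A] [Module K A]
    (φ : A →ₗ[K] A →ₗ[K] A) (x y : A) : A :=
  φ x y - φ y x

/-- `D(φ,φ')(x,y,z) = φ(x,φ'(y,z)) − φ(φ'(x,y),z)`. -/
def defD {K A : Type*} [Field K] [AddCommGroup A] [Module K A]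
    (φ φ' : A →ₗ[K] A →ₗ[K] A) (x y z : A) : A :=
  φ x (φ' y z) - φ (φ' x y) z

/-- The Leibniz operator `L(x,y,z) = ψ₁(μ₀(x,y),z) − μ₀(x,ψ₁(y,z)) − μ₀(y,ψ₁(x,z))`. -/
def leibnizOp {K A : Type*} [Field K] [AddCommGroup A] [Module K A]
    (μ₀ φ₁ : A →ₗ[K] A →ₗ[K] A) (x y z : A) : A :=
  skewPart φ₁ (μ₀ x y) z - μ₀ x (skewPart φ₁ y z) - μ₀ y (skewPart φ₁ x z)

/-! Both conclusions are linear consequences of the deformation equations of orders one and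
two, modulo commutativity of `μ₀`. Write `F = v·D(μ₀,φ₁) + v·D(φ₁,μ₀)`, so that
order one reads `F = 0`. Using `μ₀(a,b) = μ₀(b,a)`, the combination
`2F(x,y,z) + 3F(x,z,y) + 2F(y,z,x) − F(z,x,y)` equals `3(L(x,y,z) − L(z,y,x))`.
At order two, the cyclic sum of `v·D(φ₁,φ₁)` is three times the Jacobiator of `ψ₁` (an identity
for any bilinear map), while the cyclic sum of `v·D(μ₀,φ₂) + v·D(φ₂,μ₀)` vanishes by
commutativity. Dividing by `3` uses characteristic zero. -/

section

variable {K A : Type*} [Field K] [AddCommGroup A] [Module K A]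

/-- `v · D(φ, φ')` for `v = 2Id − τ₁₂ − τ₁₃ − τ₂₃ + c`, the summand of the deformation equations. -/
def vDefD (φ φ' : A →ₗ[K] A →ₗ[K] A) (x y z : A) : A :=
  (2 : K) • defD φ φ' x y z - defD φ φ' y x z - defD φ φ' z y x - defD φ φ' x z y +
    defD φ φ' y z x

theorem vDefD_cyclic_self (φ : A →ₗ[K] A →ₗ[K] A) (x y z : A) :
    vDefD φ φ x y z + vDefD φ φ y z x + vDefD φ φ z x y =
      (3 : K) • (skewPart φ x (skewPart φ y z) + skewPart φ y (skewPart φ z x) +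
        skewPart φ z (skewPart φ x y)) := by
  simp only [vDefD, defD, skewPart, map_sub, LinearMap.sub_apply]
  module

theorem vDefD_cyclic_add_of_comm {μ : A →ₗ[K] A →ₗ[K] A} (hμ : ∀ x y, μ x y = μ y x)
    (φ : A →ₗ[K] A →ₗ[K] A) (x y z : A) :
    (vDefD μ φ x y z + vDefD φ μ x y z) + (vDefD μ φ y z x + vDefD φ μ y z x) +
      (vDefD μ φ z x y + vDefD φ μ z x y) = 0 := by
  simp only [vDefD, defD]
  rw [hμ (φ x y), hμ (φ y x), hμ (φ y z), hμ (φ z y), hμ (φ z x), hμ (φ x z),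
    hμ y x, hμ z y, hμ x z]
  module

theorem leibnizOp_symm_of_vDefD {μ φ : A →ₗ[K] A →ₗ[K] A} (hμ : ∀ x y, μ x y = μ y x)
    (h3 : (3 : K) ≠ 0) (hφ : ∀ x y z, vDefD μ φ x y z + vDefD φ μ x y z = 0) (x y z : A) :
    leibnizOp μ φ x y z = leibnizOp μ φ z y x := by
  have key : (3 : K) • (leibnizOp μ φ x y z - leibnizOp μ φ z y x) =
      (2 : K) • (vDefD μ φ x y z + vDefD φ μ x y z) +
        (3 : K) • (vDefD μ φ x z y + vDefD φ μ x z y) +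
        (2 : K) • (vDefD μ φ y z x + vDefD φ μ y z x) -
        (vDefD μ φ z x y + vDefD φ μ z x y) := by
    simp only [leibnizOp, vDefD, defD, skewPart, map_sub]
    rw [hμ (φ x y), hμ (φ y x), hμ (φ y z), hμ (φ z y), hμ (φ z x), hμ (φ x z),
      hμ y x, hμ z y, hμ x z]
    module
  rw [hφ, hφ, hφ, hφ] at key
  simpa [sub_eq_zero, h3] using key

theorem jacobi_skewPart_of_vDefD {μ φ₁ φ₂ : A →ₗ[K] A →ₗ[K] A} (hμ : ∀ x y, μ x y = μ y x)
    (h3 : (3 : K) ≠ 0)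
    (hφ : ∀ x y z, vDefD μ φ₂ x y z + vDefD φ₁ φ₁ x y z + vDefD φ₂ μ x y z = 0) (x y z : A) :
    skewPart φ₁ x (skewPart φ₁ y z) + skewPart φ₁ y (skewPart φ₁ z x) +
      skewPart φ₁ z (skewPart φ₁ x y) = 0 := by
  have key := vDefD_cyclic_self φ₁ x y z
  have hcyc := vDefD_cyclic_add_of_comm hμ φ₂ x y z
  rw [← smul_right_inj h3, smul_zero, ← key]
  linear_combination (norm := module) hφ x y z + hφ y z x + hφ z x y - hcyc

end

theorem rank5_deformation_pseudo_poisson_general {K A : Type*} [Field K] [CharZero K]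
    [AddCommGroup A] [Module K A]
    (μ₀ : A →ₗ[K] A →ₗ[K] A)
    (hcomm : ∀ x y : A, μ₀ x y = μ₀ y x)
    (φ : ℕ → (A →ₗ[K] A →ₗ[K] A))
    (h0 : φ 0 = μ₀)
    (hdef : ∀ k : ℕ, ∀ x y z : A,
      ∑ p ∈ Finset.HasAntidiagonal.antidiagonal k,
        ((2 : K) • defD (φ p.1) (φ p.2) x y z - defD (φ p.1) (φ p.2) y x z -
          defD (φ p.1) (φ p.2) z y x - defD (φ p.1) (φ p.2) x z y +
          defD (φ p.1) (φ p.2) y z x) = 0) :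
    (∀ x y z : A,
      skewPart (φ 1) x (skewPart (φ 1) y z) + skewPart (φ 1) y (skewPart (φ 1) z x) +
        skewPart (φ 1) z (skewPart (φ 1) x y) = 0) ∧
    (∀ x y z : A, leibnizOp μ₀ (φ 1) x y z = leibnizOp μ₀ (φ 1) z y x) := by
  have hdef_v (k : ℕ) (x y z : A) :
      ∑ p ∈ antidiagonal k, vDefD (φ p.1) (φ p.2) x y z = 0 := hdef k x y z
  have order_one (x y z : A) : vDefD μ₀ (φ 1) x y z + vDefD (φ 1) μ₀ x y z = 0 := by
    simpa [Finset.Nat.sum_antidiagonal_succ, h0] using hdef_v 1 x y z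
  have order_two (x y z : A) :
      vDefD μ₀ (φ 2) x y z + vDefD (φ 1) (φ 1) x y z + vDefD (φ 2) μ₀ x y z = 0 := by
    simpa [Finset.Nat.sum_antidiagonal_succ, h0, add_assoc] using hdef_v 2 x y z
  exact ⟨jacobi_skewPart_of_vDefD hcomm three_ne_zero order_two,
    leibnizOp_symm_of_vDefD hcomm three_ne_zero order_one⟩

/-- For `v = 2Id − τ₁₂ − τ₁₃ − τ₂₃ + c`: any `v`-formal deformation of a commutative
`v`-multiplication `μ₀` gives a pseudo-Poisson algebra `(A, μ₀, ψ₁)`: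
`ψ₁` satisfies the Jacobi identity and `L(x,y,z) = L(z,y,x)`. -/
theorem rank5_deformation_pseudo_poisson {K A : Type*} [Field K] [CharZero K]
    [AddCommGroup A] [Module K A]
    (μ₀ : A →ₗ[K] A →ₗ[K] A)
    (hcomm : ∀ x y : A, μ₀ x y = μ₀ y x)
    (hv : ∀ x y z : A,
      (2 : K) • assocMap μ₀ x y z - assocMap μ₀ y x z - assocMap μ₀ z y x -
        assocMap μ₀ x z y + assocMap μ₀ y z x = 0)
    (φ : ℕ → (A →ₗ[K] A →ₗ[K] A))
    (h0 : φ 0 = μ₀)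
    (hdef : ∀ k : ℕ, ∀ x y z : A,
      ∑ p ∈ Finset.HasAntidiagonal.antidiagonal k,
        ((2 : K) • defD (φ p.1) (φ p.2) x y z - defD (φ p.1) (φ p.2) y x z -
          defD (φ p.1) (φ p.2) z y x - defD (φ p.1) (φ p.2) x z y +
          defD (φ p.1) (φ p.2) y z x) = 0) :
    (∀ x y z : A,
      skewPart (φ 1) x (skewPart (φ 1) y z) + skewPart (φ 1) y (skewPart (φ 1) z x) +
        skewPart (φ 1) z (skewPart (φ 1) x y) = 0) ∧
    (∀ x y z : A, leibnizOp μ₀ (φ 1) x y z = leibnizOp μ₀ (φ 1) z y x) :=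
  rank5_deformation_pseudo_poisson_general μ₀ hcomm φ h0 hdef
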